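/- arXiv:0903.5379 — 4 statements merged into one kernel-verified Lean document; each statement's English description precedes it below -/
import Mathlib

section
/- For n ≥ 2, the set of well-labelled Motzkin paths of size n starting with a 0 step is in bijection with {1,...,n} × (well-labelled Motzkin paths of size n-1); in particular the number of such paths equals n times the number of well-labelled Motzkin paths of size n-1. -/
/-- The steps of the word are letters in `{-1,0,+1}`. -/
def StepsOK (n : ℕ) (p : Fin (n - 1) → ℤ) : Prop :=
  ∀ i, p i = -1 ∨ p i = 0 ∨ p i = 1

/-- Compatibility between the word and the permutation: a `-1` step forces an ascent
of the labels and a `+1` step forces a descent. -/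
def Compat (n : ℕ) (p : Fin (n - 1) → ℤ) (σ : Equiv.Perm (Fin n)) : Prop :=
  ∀ i : Fin (n - 1),
    (p i = -1 → σ ⟨i.1, by have := i.isLt; omega⟩ < σ ⟨i.1 + 1, by have := i.isLt; omega⟩) ∧
    (p i = 1 → σ ⟨i.1 + 1, by have := i.isLt; omega⟩ < σ ⟨i.1, by have := i.isLt; omega⟩)

/-- Partial sum `p 1 + ... + p j` of the word. -/
def psum (n : ℕ) (p : Fin (n - 1) → ℤ) (j : ℕ) : ℤ :=
  ∑ i ∈ Finset.univ.filter (fun i : Fin (n - 1) => i.1 < j), p i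

/-- Well-labelled positive path of size `n`. -/
def IsPositivePath (n : ℕ) (p : Fin (n - 1) → ℤ) (σ : Equiv.Perm (Fin n)) : Prop :=
  StepsOK n p ∧ Compat n p σ ∧ ∀ j ≤ n - 1, 0 ≤ psum n p j

/-- Well-labelled Motzkin path of size `n`. -/
def IsMotzkinPath (n : ℕ) (p : Fin (n - 1) → ℤ) (σ : Equiv.Perm (Fin n)) : Prop :=
  StepsOK n p ∧ Compat n p σ ∧ (∀ j ≤ n - 2, 0 ≤ psum n p j) ∧ psum n p (n - 1) = -1

/-- Number of well-labelled Motzkin paths of size `n`. -/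
noncomputable def motzkinCount (n : ℕ) : ℕ :=
  Nat.card {ps : (Fin (n - 1) → ℤ) × Equiv.Perm (Fin n) // IsMotzkinPath n ps.1 ps.2}

/-- Number of well-labelled positive paths of size `n`. -/
noncomputable def positiveCount (n : ℕ) : ℕ :=
  Nat.card {ps : (Fin (n - 1) → ℤ) × Equiv.Perm (Fin n) // IsPositivePath n ps.1 ps.2}

/-- Number of horizontal steps (letters `0`) of a word. -/
def horizCount (n : ℕ) (p : Fin (n - 1) → ℤ) : ℕ :=
  (Finset.univ.filter (fun i => p i = 0)).card

-- auxiliary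
noncomputable def unSucc {n : ℕ} (q x : Fin (n + 1)) (h : x ≠ q) : Fin n :=
  (Fin.exists_succAbove_eq h).choose

lemma succAbove_unSucc {n : ℕ} (q x : Fin (n + 1)) (h : x ≠ q) :
    q.succAbove (unSucc q x h) = x :=
  (Fin.exists_succAbove_eq h).choose_spec

lemma unSucc_eq {n : ℕ} (q x : Fin (n + 1)) (h : x ≠ q) (y : Fin n)
    (hy : q.succAbove y = x) : unSucc q x h = y :=
  Fin.succAbove_right_injective (by rw [succAbove_unSucc, hy])

lemma unSucc_lt_unSucc {n : ℕ} (q x y : Fin (n + 1)) (hx : x ≠ q) (hy : y ≠ q) :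
    unSucc q x hx < unSucc q y hy ↔ x < y := by
  rw [← Fin.succAbove_lt_succAbove_iff (p := q), succAbove_unSucc, succAbove_unSucc]

lemma psum_succ (m : ℕ) (p : Fin (m + 1) → ℤ) (j : ℕ) :
    psum (m + 2) p (j + 1) = p 0 + psum (m + 1) (fun i => p i.succ) j := by
  show (∑ i ∈ Finset.univ.filter (fun i : Fin (m + 1) => i.1 < j + 1), p i)
      = p 0 + ∑ i ∈ Finset.univ.filter (fun i : Fin m => i.1 < j), p i.succ
  rw [Finset.sum_filter, Finset.sum_filter, Fin.sum_univ_succ]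
  simp [Nat.succ_lt_succ_iff]

lemma psum_zero (n : ℕ) (p : Fin (n - 1) → ℤ) : psum n p 0 = 0 := by
  simp [psum]

noncomputable def downPerm {m : ℕ} (σ : Equiv.Perm (Fin (m + 2))) : Equiv.Perm (Fin (m + 1)) :=
  Equiv.ofBijective
    (fun j => unSucc (σ 0) (σ j.succ) (σ.injective.ne (Fin.succ_ne_zero j)))
    (Finite.injective_iff_bijective.mp (fun a b hab => by
      have h2 := congrArg (Fin.succAbove (σ 0)) hab
      rw [succAbove_unSucc, succAbove_unSucc] at h2
      exact Fin.succ_injective _ (σ.injective h2)))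

lemma downPerm_apply {m : ℕ} (σ : Equiv.Perm (Fin (m + 2))) (j : Fin (m + 1)) :
    downPerm σ j = unSucc (σ 0) (σ j.succ) (σ.injective.ne (Fin.succ_ne_zero j)) := rfl

noncomputable def upPerm {m : ℕ} (q : Fin (m + 2)) (τ : Equiv.Perm (Fin (m + 1))) :
    Equiv.Perm (Fin (m + 2)) :=
  Equiv.ofBijective (Fin.cases q (fun j => q.succAbove (τ j)))
    (Finite.injective_iff_bijective.mp (fun a b => by
      induction a using Fin.cases with
      | zero =>
        induction b using Fin.cases with
        | zero => intro _; rfl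
        | succ b => intro h; simp only [Fin.cases_zero, Fin.cases_succ] at h
                    exact absurd h.symm (Fin.succAbove_ne q (τ b))
      | succ a =>
        induction b using Fin.cases with
        | zero => intro h; simp only [Fin.cases_zero, Fin.cases_succ] at h
                  exact absurd h (Fin.succAbove_ne q (τ a))
        | succ b => intro h; simp only [Fin.cases_succ] at h
                    exact congrArg Fin.succ (τ.injective (Fin.succAbove_right_injective h))))

lemma upPerm_apply_zero {m : ℕ} (q : Fin (m + 2)) (τ : Equiv.Perm (Fin (m + 1))) :
    upPerm q τ 0 = q := rfl

lemma upPerm_apply_succ {m : ℕ} (q : Fin (m + 2)) (τ : Equiv.Perm (Fin (m + 1)))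
    (j : Fin (m + 1)) : upPerm q τ j.succ = q.succAbove (τ j) := by
  show (Fin.cases q (fun j => q.succAbove (τ j)) : Fin (m+2) → Fin (m+2)) j.succ = _
  simp

lemma upPerm_apply_mk_succ {m : ℕ} (q : Fin (m + 2)) (τ : Equiv.Perm (Fin (m + 1)))
    (v : ℕ) (h : v + 1 < m + 2) :
    upPerm q τ ⟨v + 1, h⟩ = q.succAbove (τ ⟨v, by omega⟩) :=
  upPerm_apply_succ q τ ⟨v, by omega⟩

lemma fwd_motzkin {m : ℕ} {p : Fin (m + 1) → ℤ} {σ : Equiv.Perm (Fin (m + 2))}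
    (h : IsMotzkinPath (m + 2) p σ) (h0 : p 0 = 0) :
    IsMotzkinPath (m + 1) (fun i => p i.succ) (downPerm σ) := by
  obtain ⟨hs, hc, hpos, hfin⟩ := h
  refine ⟨fun i => hs i.succ, ?_, ?_, ?_⟩
  · intro i
    constructor
    · intro hp
      show downPerm σ ⟨i.1, _⟩ < downPerm σ ⟨i.1 + 1, _⟩
      rw [downPerm_apply, downPerm_apply, unSucc_lt_unSucc]
      exact (hc i.succ).1 hp
    · intro hp
      show downPerm σ ⟨i.1 + 1, _⟩ < downPerm σ ⟨i.1, _⟩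
      rw [downPerm_apply, downPerm_apply, unSucc_lt_unSucc]
      exact (hc i.succ).2 hp
  · intro j hj
    match j with
    | 0 => rw [psum_zero]
    | (k + 1) =>
      have h1 := psum_succ m p (k + 1)
      rw [h0] at h1
      have h2 := hpos (k + 2) (by omega)
      rw [h1] at h2
      linarith
  · have h1 := psum_succ m p m
    rw [h0] at h1
    have h2 : psum (m + 2) p (m + 1) = -1 := hfin
    rw [h1] at h2
    show psum (m + 1) (fun i => p i.succ) m = -1
    linarith

lemma cases_comp_succ {m : ℕ} (p' : Fin m → ℤ) :
    (fun i : Fin m => (Fin.cases 0 p' : Fin (m + 1) → ℤ) i.succ) = p' := by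
  funext i; simp

lemma bwd_motzkin {m : ℕ} (q : Fin (m + 2)) {p' : Fin m → ℤ} {τ : Equiv.Perm (Fin (m + 1))}
    (h : IsMotzkinPath (m + 1) p' τ) :
    IsMotzkinPath (m + 2) (Fin.cases 0 p') (upPerm q τ) := by
  obtain ⟨hs, hc, hpos, hfin⟩ := h
  refine ⟨?_, ?_, ?_, ?_⟩
  · intro i
    induction i using Fin.cases with
    | zero => right; left; simp
    | succ j => simpa using hs j
  · intro i
    induction i using Fin.cases with
    | zero =>
      constructor
      · intro hp
        exact absurd (show (0:ℤ) = -1 from hp) (by norm_num)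
      · intro hp
        exact absurd (show (0:ℤ) = 1 from hp) (by norm_num)
    | succ j =>
      constructor
      · intro hp
        replace hp : p' j = -1 := hp
        show upPerm q τ ⟨(j.succ).1, _⟩ < upPerm q τ ⟨(j.succ).1 + 1, _⟩
        have e1 : upPerm q τ ⟨(j.succ).1, by omega⟩ = q.succAbove (τ ⟨j.1, by omega⟩) :=
          upPerm_apply_mk_succ q τ j.1 (by omega)
        have e2 : upPerm q τ ⟨(j.succ).1 + 1, by omega⟩ = q.succAbove (τ ⟨j.1 + 1, by omega⟩) :=
          upPerm_apply_mk_succ q τ (j.1 + 1) (by omega)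
        rw [e1, e2, Fin.succAbove_lt_succAbove_iff]
        exact (hc j).1 hp
      · intro hp
        replace hp : p' j = 1 := hp
        show upPerm q τ ⟨(j.succ).1 + 1, _⟩ < upPerm q τ ⟨(j.succ).1, _⟩
        have e1 : upPerm q τ ⟨(j.succ).1, by omega⟩ = q.succAbove (τ ⟨j.1, by omega⟩) :=
          upPerm_apply_mk_succ q τ j.1 (by omega)
        have e2 : upPerm q τ ⟨(j.succ).1 + 1, by omega⟩ = q.succAbove (τ ⟨j.1 + 1, by omega⟩) :=
          upPerm_apply_mk_succ q τ (j.1 + 1) (by omega)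
        rw [e1, e2, Fin.succAbove_lt_succAbove_iff]
        exact (hc j).2 hp
  · intro j hj
    match j with
    | 0 => rw [psum_zero]
    | (k + 1) =>
      have h1 := psum_succ m (Fin.cases 0 p') k
      rw [Fin.cases_zero, cases_comp_succ] at h1
      rw [h1]
      simpa using hpos k (by omega)
  · show psum (m + 2) (Fin.cases 0 p') (m + 1) = -1
    have h1 := psum_succ m (Fin.cases 0 p') m
    rw [Fin.cases_zero, cases_comp_succ] at h1
    rw [h1]
    simpa using hfin

lemma key (m : ℕ) :
    Nonempty
      ({ps : (Fin (m + 1) → ℤ) × Equiv.Perm (Fin (m + 2)) //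
          IsMotzkinPath (m + 2) ps.1 ps.2 ∧ ps.1 ⟨0, Nat.succ_pos m⟩ = 0} ≃
        Fin (m + 2) × {ps : (Fin m → ℤ) × Equiv.Perm (Fin (m + 1)) //
          IsMotzkinPath (m + 1) ps.1 ps.2}) := by
  refine ⟨Equiv.ofBijective
    (fun x => (x.1.2 0,
      ⟨(fun i => x.1.1 i.succ, downPerm x.1.2), fwd_motzkin x.2.1 x.2.2⟩)) ⟨?_, ?_⟩⟩
  · rintro ⟨⟨p, σ⟩, hps⟩ ⟨⟨r, τ⟩, hrs⟩ h
    simp only [Prod.mk.injEq, Subtype.mk.injEq] at h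
    obtain ⟨h1, h2, h3⟩ := h
    have hστ : ∀ j : Fin (m + 1), σ j.succ = τ j.succ := by
      intro j
      have hd : downPerm σ j = downPerm τ j := by rw [h3]
      calc σ j.succ = (σ 0).succAbove (downPerm σ j) :=
            (succAbove_unSucc (σ 0) (σ j.succ) (σ.injective.ne (Fin.succ_ne_zero j))).symm
        _ = (τ 0).succAbove (downPerm τ j) := by rw [hd, h1]
        _ = τ j.succ := succAbove_unSucc (τ 0) (τ j.succ) (τ.injective.ne (Fin.succ_ne_zero j))
    apply Subtype.ext
    refine Prod.ext ?_ ?_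
    · funext i
      induction i using Fin.cases with
      | zero => exact hps.2.trans hrs.2.symm
      | succ j => exact congrFun h2 j
    · apply Equiv.ext
      intro i
      induction i using Fin.cases with
      | zero => exact h1
      | succ j => exact hστ j
  · rintro ⟨q, ⟨⟨p', τ⟩, h⟩⟩
    refine ⟨⟨(Fin.cases 0 p', upPerm q τ), bwd_motzkin q h, ?_⟩, ?_⟩
    · show (Fin.cases 0 p' : Fin (m + 1) → ℤ) 0 = 0
      simp
    · refine Prod.ext (upPerm_apply_zero q τ) ?_
      apply Subtype.ext
      refine Prod.ext (cases_comp_succ p') ?_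
      apply Equiv.ext
      intro j
      show downPerm (upPerm q τ) j = τ j
      rw [downPerm_apply]
      apply unSucc_eq
      rw [upPerm_apply_zero, upPerm_apply_succ]

/-- For `n ≥ 2`, well-labelled Motzkin paths of size `n` starting with a `0` step are in
bijection with `{1,…,n} × (Motzkin paths of size n-1)`; in particular their number is
`n` times the number of well-labelled Motzkin paths of size `n-1`. -/
theorem motzkin_start_zero_bijection (n : ℕ) (hn : 2 ≤ n) :
    Nonempty
      ({ps : (Fin (n - 1) → ℤ) × Equiv.Perm (Fin n) //
          IsMotzkinPath n ps.1 ps.2 ∧ ps.1 ⟨0, by omega⟩ = 0} ≃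
        Fin n × {ps : (Fin (n - 1 - 1) → ℤ) × Equiv.Perm (Fin (n - 1)) //
          IsMotzkinPath (n - 1) ps.1 ps.2}) ∧
    Nat.card {ps : (Fin (n - 1) → ℤ) × Equiv.Perm (Fin n) //
        IsMotzkinPath n ps.1 ps.2 ∧ ps.1 ⟨0, by omega⟩ = 0} =
      n * motzkinCount (n - 1) := by
  obtain ⟨m, rfl⟩ : ∃ m, n = m + 2 := ⟨n - 2, by omega⟩
  obtain ⟨e⟩ := key m
  refine ⟨⟨e⟩, ?_⟩
  have h2 : Nat.card (Fin (m + 2) × {ps : (Fin m → ℤ) × Equiv.Perm (Fin (m + 1)) //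
      IsMotzkinPath (m + 1) ps.1 ps.2}) = (m + 2) * motzkinCount (m + 1) := by
    rw [Nat.card_prod, Nat.card_eq_fintype_card, Fintype.card_fin]
    rfl
  exact (Nat.card_congr e).trans h2
end

section
/- If A(z) is a formal power series with constant term 0 satisfying A = z²/2 + zA + A²/2, and B is a formal power series with B(0) = 0 satisfying B = z + zB + A + AB, then B = A', the formal derivative of A. Equivalently, B(z) = 1/√(1-2z) - 1. -/
/-!
Completing the square turns the equation for `A` into `U² = 1 - 2z` for `U = 1 - z - A`.
Differentiating gives `U · (1 + A') = 1`, while the equation for `B` says `U · (1 + B) = 1`;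
inverses are unique, so `B = A'`, and `(1 + B)² (1 - 2z) = ((1 + B) U)² = 1`.
-/

open PowerSeries

section

variable {K : Type*} [Field K] [NeZero (2 : K)]

theorem PowerSeries.C_half_mul_two : C (R := K) (1 / 2) * 2 = 1 := by
  rw [← map_ofNat C 2, ← map_mul, one_div, inv_mul_cancel₀ (two_ne_zero (α := K)), map_one]

theorem one_sub_X_sub_sq_of_eq {A : PowerSeries K}
    (hA : A = C (R := K) (1 / 2) * X ^ 2 + X * A + C (R := K) (1 / 2) * A ^ 2) :
    (1 - X - A) ^ 2 = 1 - 2 * X := by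
  linear_combination (-2 : PowerSeries K) * hA - (X ^ 2 + A ^ 2) * C_half_mul_two (K := K)

theorem mul_neg_derivative_eq_one_of_sq_eq {U : PowerSeries K} (hU : U ^ 2 = 1 - 2 * X) :
    U * -derivative K U = 1 := by
  have hd : 2 * U * derivative K U = -2 := by
    have := congrArg (derivative K) hU
    simp only [Derivation.leibniz_pow, map_sub, Derivation.map_one_eq_zero, Derivation.leibniz,
      derivative_X, ← map_ofNat C 2, derivative_C, smul_eq_mul] at this
    rw [map_ofNat] at this
    linear_combination this
  have h2 : (2 : PowerSeries K) ≠ 0 := by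
    rw [← map_ofNat C 2]
    exact (map_ne_zero_iff _ (C_injective (R := K))).2 two_ne_zero
  apply mul_left_cancel₀ h2
  linear_combination -hd

end

theorem positive_egf_eq_derivative_general (A B : PowerSeries ℚ)
    (hA : A = PowerSeries.C (R := ℚ) (1 / 2) * X ^ 2 + X * A + PowerSeries.C (R := ℚ) (1 / 2) * A ^ 2)
    (hB : B = X + X * B + A + A * B) :
    B = PowerSeries.derivative ℚ A ∧ (1 + B) ^ 2 * (1 - 2 * X) = 1 := by
  have hU := one_sub_X_sub_sq_of_eq hA
  have hUA : (1 - X - A) * (1 + derivative ℚ A) = 1 := by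
    simpa [add_comm] using mul_neg_derivative_eq_one_of_sq_eq hU
  have hUB : (1 + B) * (1 - X - A) = 1 := by linear_combination hB
  refine ⟨add_left_cancel (left_inv_eq_right_inv hUB hUA), ?_⟩
  linear_combination ((1 + B) * (1 - X - A) + 1) * hUB - (1 + B) ^ 2 * hU

open PowerSeries in
/-- If `A` is a formal power series with constant term `0` satisfying `A = z²/2 + zA + A²/2`,
and `B` has constant term `0` and satisfies `B = z + zB + A + AB`, then `B` is the formal
derivative of `A`; equivalently `(1+B)²(1-2z) = 1`, i.e. `B = 1/√(1-2z) - 1`. -/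
theorem positive_egf_eq_derivative (A B : PowerSeries ℚ)
    (hA0 : PowerSeries.constantCoeff A = 0)
    (hA : A = PowerSeries.C (R := ℚ) (1 / 2) * X ^ 2 + X * A + PowerSeries.C (R := ℚ) (1 / 2) * A ^ 2)
    (hB0 : PowerSeries.constantCoeff B = 0)
    (hB : B = X + X * B + A + A * B) :
    B = PowerSeries.derivative ℚ A ∧ (1 + B) ^ 2 * (1 - 2 * X) = 1 :=
  positive_egf_eq_derivative_general A B hA hB
end

section
/- There is a bijection between labelled binary trees with n leaves (n ≥ 2) and perfect matchings of {1,...,2n-2}; in particular the number of such trees is (2n-3)!!. -/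
/-- Plane binary trees with natural-number labels on the leaves. -/
inductive LTree where
  | leaf : ℕ → LTree
  | node : LTree → LTree → LTree

/-- The multiset of leaf labels of a tree. -/
def LTree.labels : LTree → Multiset ℕ
  | .leaf k => {k}
  | .node a b => a.labels + b.labels

/-- Two plane trees represent the same tree with unordered children. -/
inductive LTree.Flip : LTree → LTree → Prop
  | leaf (k : ℕ) : Flip (.leaf k) (.leaf k)
  | node {a a' b b' : LTree} : Flip a a' → Flip b b' → Flip (.node a b) (.node a' b')
  | swap {a a' b b' : LTree} : Flip a a' → Flip b b' → Flip (.node a b) (.node b' a')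

/-- Labelled binary trees with `n` leaves labelled bijectively by `{1,…,n}`, where each
internal vertex has two unordered children. -/
def LabTree (n : ℕ) : Type :=
  Quot (fun a b : {t : LTree // t.labels = (Finset.Icc 1 n).val} => LTree.Flip a.1 b.1)

/-- A perfect matching of `{1,…,m}`: a fixed-point free involution. -/
def Matching (m : ℕ) : Type :=
  {π : Equiv.Perm (Fin m) // ∀ i, π i ≠ i ∧ π (π i) = i}

/-!
Deleting the leaf `n + 1` from a tree with `n + 1 ≥ 2` leaves (and suppressing its parent) leaves a
tree with `n` leaves together with the vertex where `n + 1` was attached; conversely `n + 1` can be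
grafted above any of the `2n - 1` vertices of a tree with `n` leaves. Recording a vertex by the set
of labels below it makes this independent of the planar representative, so the number of trees
satisfies `T (n + 1) = (2n - 1) T n`. Likewise a perfect matching of a set of size `2m + 2` is a
partner for one fixed point (`2m + 1` choices) together with a perfect matching of the remaining
`2m` points. Both counts are therefore `(2n - 3)!!`, and finite types of equal cardinality are
equivalent.
-/

theorem Nat.card_sigma_of_forall_card_eq {α : Type*} {β : α → Type*} [∀ a, Finite (β a)] {k : ℕ}
    (h : ∀ a, Nat.card (β a) = k) : Nat.card (Σ a, β a) = Nat.card α * k := by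
  let e : (Σ a, β a) ≃ α × Fin k :=
    (Equiv.sigmaCongrRight fun a ↦ (Finite.equivFin (β a)).trans (finCongr (h a))).trans
      (Equiv.sigmaEquivProd α (Fin k))
  rw [Nat.card_congr e, Nat.card_prod, Nat.card_fin]

theorem Nat.card_subtype_notMem {α : Type*} [Finite α] (s : Finset α) :
    Nat.card {x // x ∉ s} = Nat.card α - s.card := by
  classical
  have := Fintype.ofFinite α
  rw [Nat.card_eq_fintype_card, Fintype.card_subtype_compl, Fintype.card_coe,
    Nat.card_eq_fintype_card]

theorem Nat.Icc_add_one_right_val {a b : ℕ} (h : a ≤ b + 1) :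
    (Finset.Icc a (b + 1)).val = (Finset.Icc a b).val + {b + 1} := by
  rw [← Finset.insert_Icc_right_eq_Icc_add_one h, Finset.insert_val_of_notMem (by simp),
    ← Multiset.singleton_add, add_comm]

abbrev PerfectMatching (α : Type*) : Type _ :=
  {π : Equiv.Perm α // ∀ i, π i ≠ i ∧ π (π i) = i}

namespace PerfectMatching

variable {α : Type*}

instance [IsEmpty α] : Unique (PerfectMatching α) where
  default := ⟨1, isEmptyElim⟩
  uniq _ := Subtype.ext (Subsingleton.elim _ _)

lemma symm_eq (π : PerfectMatching α) : π.1.symm = π.1 :=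
  Equiv.ext fun x ↦ π.1.symm_apply_eq.2 (π.2 x).2.symm

def partner (a : α) (π : PerfectMatching α) : {b // b ≠ a} := ⟨π.1 a, (π.2 a).1⟩

lemma apply_eq_of_apply_eq {a b : α} (π : PerfectMatching α) (h : π.1 a = b) : π.1 b = a :=
  h ▸ (π.2 a).2

def restrict {a b : α} (π : PerfectMatching α) (h : π.1 a = b) :
    PerfectMatching {x // x ≠ a ∧ x ≠ b} :=
  ⟨π.1.subtypePerm fun x ↦ by
      have hb := π.apply_eq_of_apply_eq h
      simp only [Ne, ← π.1.eq_symm_apply, symm_eq, h, hb, and_comm],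
    fun x ↦ ⟨fun hx ↦ (π.2 x).1 (congrArg Subtype.val hx), Subtype.ext (π.2 x).2⟩⟩

variable [DecidableEq α] {a b : α}

def extendPerm (a b : α) (σ : PerfectMatching {x // x ≠ a ∧ x ≠ b}) : Equiv.Perm α :=
  Equiv.swap a b * Equiv.Perm.ofSubtype σ.1

lemma extendPerm_apply_left (σ : PerfectMatching {x // x ≠ a ∧ x ≠ b}) :
    extendPerm a b σ a = b := by
  simp [extendPerm, Equiv.Perm.ofSubtype_apply_of_not_mem]

lemma extendPerm_apply_right (σ : PerfectMatching {x // x ≠ a ∧ x ≠ b}) :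
    extendPerm a b σ b = a := by
  simp [extendPerm, Equiv.Perm.ofSubtype_apply_of_not_mem]

lemma extendPerm_apply_of_ne (σ : PerfectMatching {x // x ≠ a ∧ x ≠ b}) {x : α}
    (hx : x ≠ a ∧ x ≠ b) : extendPerm a b σ x = σ.1 ⟨x, hx⟩ := by
  rw [extendPerm, Equiv.Perm.mul_apply,
    Equiv.Perm.ofSubtype_apply_of_mem (p := fun x ↦ x ≠ a ∧ x ≠ b) _ hx]
  exact Equiv.swap_apply_of_ne_of_ne (σ.1 _).2.1 (σ.1 _).2.2

def extend (hab : a ≠ b) (σ : PerfectMatching {x // x ≠ a ∧ x ≠ b}) : PerfectMatching α :=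
  ⟨extendPerm a b σ, fun x ↦ by
    by_cases hx : x ≠ a ∧ x ≠ b
    · rw [extendPerm_apply_of_ne σ hx, extendPerm_apply_of_ne σ (σ.1 _).2]
      exact ⟨fun h ↦ (σ.2 _).1 (Subtype.ext h), congrArg Subtype.val (σ.2 _).2⟩
    · obtain rfl | rfl : x = a ∨ x = b := by tauto
      · simp [extendPerm_apply_left, extendPerm_apply_right, hab.symm]
      · simp [extendPerm_apply_left, extendPerm_apply_right, hab]⟩

def restrictEquiv (hab : a ≠ b) :
    {π : PerfectMatching α // π.1 a = b} ≃ PerfectMatching {x // x ≠ a ∧ x ≠ b} where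
  toFun π := π.1.restrict π.2
  invFun σ := ⟨extend hab σ, extendPerm_apply_left σ⟩
  left_inv π := by
    refine Subtype.ext (Subtype.ext (Equiv.ext fun x ↦ ?_))
    by_cases hx : x ≠ a ∧ x ≠ b
    · exact extendPerm_apply_of_ne _ hx
    · obtain rfl | rfl : x = a ∨ x = b := by tauto
      · exact (extendPerm_apply_left _).trans π.2.symm
      · exact (extendPerm_apply_right _).trans (π.1.apply_eq_of_apply_eq π.2).symm
  right_inv σ := Subtype.ext (Equiv.ext fun x ↦ Subtype.ext (extendPerm_apply_of_ne σ x.2))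

open Nat in
theorem card_eq_doubleFactorial : ∀ (m : ℕ) (α : Type*) [Finite α], Nat.card α = 2 * m →
    Nat.card (PerfectMatching α) = (2 * m - 1)‼
  | 0, α, _, h => by
    have := Finite.card_eq_zero_iff.1 h
    simp
  | m + 1, α, _, h => by
    classical
    obtain ⟨a⟩ : Nonempty α := Nat.card_pos_iff.1 (by omega) |>.1
    have hfiber (b : {b // b ≠ a}) :
        Nat.card {π // partner a π = b} = (2 * m - 1)‼ := by
      rw [Nat.card_congr ((Equiv.subtypeEquivRight fun π ↦ Subtype.ext_iff).trans
        (restrictEquiv b.2.symm))]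
      refine card_eq_doubleFactorial m _ ?_
      rw [Nat.card_congr (Equiv.subtypeEquivRight (q := (· ∉ ({a, b.1} : Finset α))) (by simp)),
        Nat.card_subtype_notMem, Finset.card_pair b.2.symm]
      omega
    have hpartners : Nat.card {b // b ≠ a} = 2 * m + 1 := by
      rw [Nat.card_congr (Equiv.subtypeEquivRight (q := (· ∉ ({a} : Finset α))) (by simp)),
        Nat.card_subtype_notMem, Finset.card_singleton]
      omega
    rw [← Nat.card_congr (Equiv.sigmaFiberEquiv (partner a)),
      Nat.card_sigma_of_forall_card_eq hfiber, hpartners,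
      show 2 * (m + 1) - 1 = 2 * m + 1 by omega]
    exact (Nat.doubleFactorial_add_one (2 * m)).symm

end PerfectMatching

namespace LTree

variable {m n k : ℕ} {a b t : LTree} {S : Multiset ℕ}

@[simp] lemma labels_leaf (k : ℕ) : (leaf k).labels = {k} := rfl

@[simp] lemma labels_node (a b : LTree) : (node a b).labels = a.labels + b.labels := rfl

lemma card_labels_pos : ∀ t : LTree, 0 < Multiset.card t.labels
  | leaf _ => by simp
  | node a b => by simpa using Or.inl a.card_labels_pos

lemma labels_ne_zero (t : LTree) : t.labels ≠ 0 :=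
  Multiset.card_pos.1 t.card_labels_pos

lemma eq_leaf_of_labels_eq_singleton : ∀ {t : LTree}, t.labels = {k} → t = leaf k
  | leaf _, h => by rw [Multiset.singleton_inj.1 h]
  | node a b, h => by
    have := congrArg Multiset.card h
    simp only [labels_node, Multiset.card_add, Multiset.card_singleton] at this
    have := a.card_labels_pos; have := b.card_labels_pos; omega

lemma ne_labels_add_of_le_left (h : S ≤ a.labels) : S ≠ a.labels + b.labels := by
  rintro rfl
  have := Multiset.card_le_card h
  simp only [Multiset.card_add] at this
  have := b.card_labels_pos; omega

lemma ne_labels_add_of_le_right (h : S ≤ b.labels) : S ≠ a.labels + b.labels :=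
  add_comm a.labels b.labels ▸ ne_labels_add_of_le_left h

lemma Flip.refl : ∀ t : LTree, Flip t t
  | .leaf k => .leaf k
  | .node a b => .node (Flip.refl a) (Flip.refl b)

lemma Flip.labels_eq {t t' : LTree} (h : Flip t t') : t.labels = t'.labels := by
  induction h with
  | leaf => rfl
  | node _ _ ih₁ ih₂ => simp [ih₁, ih₂]
  | swap _ _ ih₁ ih₂ => simp [ih₁, ih₂, add_comm]

/-- The label sets of the subtrees of `t`; when the labels are distinct they name its vertices. -/
def clusters : LTree → Finset (Multiset ℕ)
  | leaf k => {{k}}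
  | node a b => insert (a.labels + b.labels) (a.clusters ∪ b.clusters)

lemma mem_clusters_node :
    S ∈ (node a b).clusters ↔ S = a.labels + b.labels ∨ S ∈ a.clusters ∨ S ∈ b.clusters := by
  simp [clusters]

lemma labels_mem_clusters : ∀ t : LTree, t.labels ∈ t.clusters
  | leaf _ => by simp [clusters]
  | node _ _ => by simp [clusters]

lemma le_labels_of_mem_clusters : ∀ {t : LTree}, S ∈ t.clusters → S ≤ t.labels
  | leaf _, h => by simp_all [clusters]
  | node a b, h => by
    rcases mem_clusters_node.1 h with rfl | h | h
    · rfl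
    · exact (le_labels_of_mem_clusters h).trans (Multiset.le_add_right _ _)
    · exact (le_labels_of_mem_clusters h).trans (Multiset.le_add_left _ _)

lemma ne_zero_of_mem_clusters : ∀ {t : LTree}, S ∈ t.clusters → S ≠ 0
  | leaf _, h => by simp_all [clusters]
  | node a b, h => by
    rcases mem_clusters_node.1 h with rfl | h | h
    · exact (node a b).labels_ne_zero
    · exact ne_zero_of_mem_clusters h
    · exact ne_zero_of_mem_clusters h

lemma not_le_of_mem_clusters (hd : Disjoint a.labels b.labels) (hS : S ∈ b.clusters) :
    ¬ S ≤ a.labels := fun hle ↦ by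
  obtain ⟨x, hx⟩ := Multiset.exists_mem_of_ne_zero (ne_zero_of_mem_clusters hS)
  exact Multiset.disjoint_left.1 hd (Multiset.mem_of_le hle hx)
    (Multiset.mem_of_le (le_labels_of_mem_clusters hS) hx)

lemma card_clusters : ∀ {t : LTree}, t.labels.Nodup →
    t.clusters.card = 2 * Multiset.card t.labels - 1
  | leaf _, _ => by simp [clusters]
  | node a b, h => by
    obtain ⟨ha, hb, hd⟩ := Multiset.nodup_add.1 h
    have hdisj : Disjoint a.clusters b.clusters :=
      Finset.disjoint_left.2 fun _ hSa hSb ↦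
        not_le_of_mem_clusters hd hSb (le_labels_of_mem_clusters hSa)
    have hnotMem : a.labels + b.labels ∉ a.clusters ∪ b.clusters := by
      simp only [Finset.mem_union, not_or]
      exact ⟨fun h ↦ ne_labels_add_of_le_left (le_labels_of_mem_clusters h) rfl,
        fun h ↦ ne_labels_add_of_le_right (le_labels_of_mem_clusters h) rfl⟩
    rw [clusters, Finset.card_insert_of_notMem hnotMem, Finset.card_union_of_disjoint hdisj,
      card_clusters ha, card_clusters hb, labels_node, Multiset.card_add]
    have := a.card_labels_pos; have := b.card_labels_pos
    omega

lemma Flip.clusters_eq {t t' : LTree} (h : Flip t t') : t.clusters = t'.clusters := by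
  induction h with
  | leaf => rfl
  | node h₁ h₂ ih₁ ih₂ => simp only [clusters, ih₁, ih₂, h₁.labels_eq, h₂.labels_eq]
  | swap h₁ h₂ ih₁ ih₂ =>
    simp only [clusters, ih₁, ih₂, h₁.labels_eq, h₂.labels_eq, add_comm, Finset.union_comm]

/-- Graft a new leaf `m` as the sibling of the subtree with label set `S`. -/
def graft (m : ℕ) (S : Multiset ℕ) : LTree → LTree
  | leaf k => node (leaf k) (leaf m)
  | node a b =>
    if S = a.labels + b.labels then node (node a b) (leaf m)
    else if S ≤ a.labels then node (graft m S a) b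
    else node a (graft m S b)

def eraseLeaf (m : ℕ) : LTree → LTree
  | leaf k => leaf k
  | node a b =>
    if m ∈ a.labels then (if a.labels = {m} then b else node (eraseLeaf m a) b)
    else (if b.labels = {m} then a else node a (eraseLeaf m b))

def siblingLabels (m : ℕ) : LTree → Multiset ℕ
  | leaf _ => 0
  | node a b =>
    if m ∈ a.labels then (if a.labels = {m} then b.labels else siblingLabels m a)
    else (if b.labels = {m} then a.labels else siblingLabels m b)

lemma labels_graft (m : ℕ) (S : Multiset ℕ) :
    ∀ t : LTree, (graft m S t).labels = t.labels + {m}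
  | leaf k => rfl
  | node a b => by
    unfold graft
    split_ifs <;> simp [labels_graft m S a, labels_graft m S b, add_right_comm, add_assoc]

lemma labels_graft_ne_singleton : (graft m S t).labels ≠ {m} := by
  simpa [labels_graft] using t.labels_ne_zero

lemma graft_labels (m : ℕ) : ∀ t : LTree, graft m t.labels t = node t (leaf m)
  | leaf _ => rfl
  | node _ _ => if_pos rfl

lemma graft_node_self (m : ℕ) (a b : LTree) :
    graft m (a.labels + b.labels) (node a b) = node (node a b) (leaf m) :=
  graft_labels m (node a b)

lemma graft_node_of_mem_left (m : ℕ) (hS : S ∈ a.clusters) :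
    graft m S (node a b) = node (graft m S a) b := by
  have hle := le_labels_of_mem_clusters hS
  rw [graft, if_neg (ne_labels_add_of_le_left hle), if_pos hle]

lemma graft_node_of_mem_right (m : ℕ) (hd : Disjoint a.labels b.labels)
    (hS : S ∈ b.clusters) : graft m S (node a b) = node a (graft m S b) := by
  rw [graft, if_neg (ne_labels_add_of_le_right (le_labels_of_mem_clusters hS)),
    if_neg (not_le_of_mem_clusters hd hS)]

lemma eraseLeaf_node_of_mem (h : m ∈ a.labels) :
    eraseLeaf m (node a b) = if a.labels = {m} then b else node (eraseLeaf m a) b := if_pos h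

lemma eraseLeaf_node_of_notMem (h : m ∉ a.labels) :
    eraseLeaf m (node a b) = if b.labels = {m} then a else node a (eraseLeaf m b) := if_neg h

lemma siblingLabels_node_of_mem (h : m ∈ a.labels) :
    siblingLabels m (node a b) = if a.labels = {m} then b.labels else siblingLabels m a :=
  if_pos h

lemma siblingLabels_node_of_notMem (h : m ∉ a.labels) :
    siblingLabels m (node a b) = if b.labels = {m} then a.labels else siblingLabels m b :=
  if_neg h

lemma labels_eraseLeaf_add (hm : m ∈ t.labels) (ht : t.labels ≠ {m}) :
    (eraseLeaf m t).labels + {m} = t.labels := by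
  induction t using eraseLeaf.induct m with
  | case1 => simp_all
  | case2 a b hma ha => simp [eraseLeaf_node_of_mem hma, ha, add_comm]
  | case3 a b hma ha ih =>
    rw [eraseLeaf_node_of_mem hma, if_neg ha, labels_node, labels_node, add_right_comm,
      ih hma ha]
  | case4 a b hma hb => simp [eraseLeaf_node_of_notMem hma, hb]
  | case5 a b hma hb ih =>
    have hmb : m ∈ b.labels := by simp_all
    rw [eraseLeaf_node_of_notMem hma, if_neg hb, labels_node, labels_node, add_assoc, ih hmb hb]

lemma labels_eraseLeaf_le (hm : m ∈ t.labels) (ht : t.labels ≠ {m}) :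
    (eraseLeaf m t).labels ≤ t.labels :=
  labels_eraseLeaf_add hm ht ▸ Multiset.le_add_right _ _

lemma siblingLabels_mem_clusters (hm : m ∈ t.labels) (ht : t.labels ≠ {m}) :
    siblingLabels m t ∈ (eraseLeaf m t).clusters := by
  induction t using eraseLeaf.induct m with
  | case1 => simp_all
  | case2 a b hma ha =>
    simpa [eraseLeaf_node_of_mem hma, siblingLabels_node_of_mem hma, ha]
      using labels_mem_clusters b
  | case3 a b hma ha ih =>
    simp [eraseLeaf_node_of_mem hma, siblingLabels_node_of_mem hma, ha, mem_clusters_node,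
      ih hma ha]
  | case4 a b hma hb =>
    simpa [eraseLeaf_node_of_notMem hma, siblingLabels_node_of_notMem hma, hb]
      using labels_mem_clusters a
  | case5 a b hma hb ih =>
    have hmb : m ∈ b.labels := by simp_all
    simp [eraseLeaf_node_of_notMem hma, siblingLabels_node_of_notMem hma, hb, mem_clusters_node,
      ih hmb hb]

lemma graft_eraseLeaf (hnd : t.labels.Nodup) (hm : m ∈ t.labels) (ht : t.labels ≠ {m}) :
    Flip (graft m (siblingLabels m t) (eraseLeaf m t)) t := by
  induction t using eraseLeaf.induct m with
  | case1 => simp_all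
  | case2 a b hma ha =>
    rw [eraseLeaf_node_of_mem hma, siblingLabels_node_of_mem hma, if_pos ha, if_pos ha,
      graft_labels, eq_leaf_of_labels_eq_singleton ha]
    exact .swap (.refl b) (.refl _)
  | case3 a b hma ha ih =>
    rw [eraseLeaf_node_of_mem hma, siblingLabels_node_of_mem hma, if_neg ha, if_neg ha,
      graft_node_of_mem_left m (siblingLabels_mem_clusters hma ha)]
    exact .node (ih (Multiset.nodup_add.1 hnd).1 hma ha) (.refl b)
  | case4 a b hma hb =>
    rw [eraseLeaf_node_of_notMem hma, siblingLabels_node_of_notMem hma, if_pos hb, if_pos hb,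
      graft_labels, eq_leaf_of_labels_eq_singleton hb]
    exact .refl _
  | case5 a b hma hb ih =>
    obtain ⟨-, hnd, hd⟩ := Multiset.nodup_add.1 hnd
    have hmb : m ∈ b.labels := by simp_all
    rw [eraseLeaf_node_of_notMem hma, siblingLabels_node_of_notMem hma, if_neg hb, if_neg hb,
      graft_node_of_mem_right m (hd.mono_right (labels_eraseLeaf_le hmb hb))
        (siblingLabels_mem_clusters hmb hb)]
    exact .node (.refl a) (ih hnd hmb hb)

lemma eraseLeaf_graft : ∀ {t : LTree}, t.labels.Nodup → m ∉ t.labels → S ∈ t.clusters →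
    eraseLeaf m (graft m S t) = t
  | leaf k, _, hm, _ => by simp_all [graft, eraseLeaf]
  | node a b, hnd, hm, hS => by
    obtain ⟨ha, hb, hd⟩ := Multiset.nodup_add.1 hnd
    obtain ⟨hma, hmb⟩ : m ∉ a.labels ∧ m ∉ b.labels := by simpa [not_or] using hm
    rcases mem_clusters_node.1 hS with rfl | hS | hS
    · rw [graft_node_self, eraseLeaf_node_of_notMem hm, if_pos (labels_leaf m)]
    · rw [graft_node_of_mem_left m hS, eraseLeaf_node_of_mem (by simp [labels_graft]),
        if_neg labels_graft_ne_singleton, eraseLeaf_graft ha hma hS]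
    · rw [graft_node_of_mem_right m hd hS, eraseLeaf_node_of_notMem hma,
        if_neg labels_graft_ne_singleton, eraseLeaf_graft hb hmb hS]

lemma siblingLabels_graft : ∀ {t : LTree}, t.labels.Nodup → m ∉ t.labels → S ∈ t.clusters →
    siblingLabels m (graft m S t) = S
  | leaf k, _, hm, hS => by simp_all [graft, siblingLabels, clusters]
  | node a b, hnd, hm, hS => by
    obtain ⟨ha, hb, hd⟩ := Multiset.nodup_add.1 hnd
    obtain ⟨hma, hmb⟩ : m ∉ a.labels ∧ m ∉ b.labels := by simpa [not_or] using hm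
    rcases mem_clusters_node.1 hS with rfl | hS | hS
    · rw [graft_node_self, siblingLabels_node_of_notMem hm, if_pos (labels_leaf m), labels_node]
    · rw [graft_node_of_mem_left m hS, siblingLabels_node_of_mem (by simp [labels_graft]),
        if_neg labels_graft_ne_singleton, siblingLabels_graft ha hma hS]
    · rw [graft_node_of_mem_right m hd hS, siblingLabels_node_of_notMem hma,
        if_neg labels_graft_ne_singleton, siblingLabels_graft hb hmb hS]

lemma Flip.graft {t t' : LTree} (h : Flip t t') (hnd : t.labels.Nodup) (hS : S ∈ t.clusters) :
    Flip (graft m S t) (graft m S t') := by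
  induction h with
  | leaf => exact .refl _
  | @node a a' b b' h₁ h₂ ih₁ ih₂ =>
    obtain ⟨ha, hb, hd⟩ := Multiset.nodup_add.1 hnd
    have hd' : Disjoint a'.labels b'.labels := h₁.labels_eq ▸ h₂.labels_eq ▸ hd
    rcases mem_clusters_node.1 hS with rfl | hS | hS
    · rw [graft_node_self, h₁.labels_eq, h₂.labels_eq, graft_node_self]
      exact .node (.node h₁ h₂) (.refl _)
    · rw [graft_node_of_mem_left m hS, graft_node_of_mem_left m (h₁.clusters_eq ▸ hS)]
      exact .node (ih₁ ha hS) h₂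
    · rw [graft_node_of_mem_right m hd hS, graft_node_of_mem_right m hd' (h₂.clusters_eq ▸ hS)]
      exact .node h₁ (ih₂ hb hS)
  | @swap a a' b b' h₁ h₂ ih₁ ih₂ =>
    obtain ⟨ha, hb, hd⟩ := Multiset.nodup_add.1 hnd
    have hd' : Disjoint b'.labels a'.labels := h₁.labels_eq ▸ h₂.labels_eq ▸ hd.symm
    rcases mem_clusters_node.1 hS with rfl | hS | hS
    · rw [graft_node_self, h₁.labels_eq, h₂.labels_eq, add_comm, graft_node_self]
      exact .node (.swap h₁ h₂) (.refl _)
    · rw [graft_node_of_mem_left m hS, graft_node_of_mem_right m hd' (h₁.clusters_eq ▸ hS)]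
      exact .swap (ih₁ ha hS) h₂
    · rw [graft_node_of_mem_right m hd hS, graft_node_of_mem_left m (h₂.clusters_eq ▸ hS)]
      exact .swap h₁ (ih₂ hb hS)

lemma Flip.eraseLeaf {t t' : LTree} (h : Flip t t') (hnd : t.labels.Nodup)
    (hm : m ∈ t.labels) : Flip (eraseLeaf m t) (eraseLeaf m t') := by
  induction h with
  | leaf => exact .refl _
  | @node a a' b b' h₁ h₂ ih₁ ih₂ =>
    obtain ⟨ha, hb, -⟩ := Multiset.nodup_add.1 hnd
    by_cases hma : m ∈ a.labels
    · rw [eraseLeaf_node_of_mem hma, eraseLeaf_node_of_mem (h₁.labels_eq ▸ hma), h₁.labels_eq]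
      split_ifs
      exacts [h₂, .node (ih₁ ha hma) h₂]
    · have hmb : m ∈ b.labels := by simp_all
      rw [eraseLeaf_node_of_notMem hma, eraseLeaf_node_of_notMem (h₁.labels_eq ▸ hma),
        h₂.labels_eq]
      split_ifs
      exacts [h₁, .node h₁ (ih₂ hb hmb)]
  | @swap a a' b b' h₁ h₂ ih₁ ih₂ =>
    obtain ⟨ha, hb, hd⟩ := Multiset.nodup_add.1 hnd
    by_cases hma : m ∈ a.labels
    · have hmb' : m ∉ b'.labels := h₂.labels_eq ▸ Multiset.disjoint_left.1 hd hma
      rw [eraseLeaf_node_of_mem hma, eraseLeaf_node_of_notMem hmb', h₁.labels_eq]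
      split_ifs
      exacts [h₂, .swap (ih₁ ha hma) h₂]
    · have hmb : m ∈ b.labels := by simp_all
      rw [eraseLeaf_node_of_notMem hma, eraseLeaf_node_of_mem (h₂.labels_eq ▸ hmb),
        h₂.labels_eq]
      split_ifs
      exacts [h₁, .swap h₁ (ih₂ hb hmb)]

lemma Flip.siblingLabels_eq {t t' : LTree} (h : Flip t t') (hnd : t.labels.Nodup)
    (hm : m ∈ t.labels) : siblingLabels m t = siblingLabels m t' := by
  induction h with
  | leaf => rfl
  | @node a a' b b' h₁ h₂ ih₁ ih₂ =>
    obtain ⟨ha, hb, -⟩ := Multiset.nodup_add.1 hnd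
    by_cases hma : m ∈ a.labels
    · rw [siblingLabels_node_of_mem hma, siblingLabels_node_of_mem (h₁.labels_eq ▸ hma),
        h₁.labels_eq, h₂.labels_eq, ih₁ ha hma]
    · have hmb : m ∈ b.labels := by simp_all
      rw [siblingLabels_node_of_notMem hma, siblingLabels_node_of_notMem (h₁.labels_eq ▸ hma),
        h₁.labels_eq, h₂.labels_eq, ih₂ hb hmb]
  | @swap a a' b b' h₁ h₂ ih₁ ih₂ =>
    obtain ⟨ha, hb, hd⟩ := Multiset.nodup_add.1 hnd
    by_cases hma : m ∈ a.labels
    · have hmb' : m ∉ b'.labels := h₂.labels_eq ▸ Multiset.disjoint_left.1 hd hma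
      rw [siblingLabels_node_of_mem hma, siblingLabels_node_of_notMem hmb', h₁.labels_eq,
        h₂.labels_eq, ih₁ ha hma]
    · have hmb : m ∈ b.labels := by simp_all
      rw [siblingLabels_node_of_notMem hma, siblingLabels_node_of_mem (h₂.labels_eq ▸ hmb),
        h₁.labels_eq, h₂.labels_eq, ih₂ hb hmb]

lemma nodup_of_labels_eq (ht : t.labels = (Finset.Icc 1 n).val) : t.labels.Nodup :=
  ht ▸ (Finset.Icc 1 n).nodup

lemma labels_ne_singleton_of_labels_eq (hn : 1 ≤ n)
    (ht : t.labels = (Finset.Icc 1 (n + 1)).val) : t.labels ≠ {n + 1} := by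
  intro h
  have := congrArg Multiset.card (ht.symm.trans h)
  simp at this
  omega

lemma labels_eraseLeaf_of_labels_eq (hn : 1 ≤ n)
    (ht : t.labels = (Finset.Icc 1 (n + 1)).val) :
    (t.eraseLeaf (n + 1)).labels = (Finset.Icc 1 n).val := by
  have := labels_eraseLeaf_add (by simp [ht]) (labels_ne_singleton_of_labels_eq hn ht)
  rwa [ht, Nat.Icc_add_one_right_val (by omega), add_left_inj] at this

lemma labels_graft_of_labels_eq (S : Multiset ℕ) (ht : t.labels = (Finset.Icc 1 n).val) :
    (t.graft (n + 1) S).labels = (Finset.Icc 1 (n + 1)).val := by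
  rw [labels_graft, ht, Nat.Icc_add_one_right_val (by omega)]

end LTree

namespace LabTree

open LTree

variable {n : ℕ}

instance : Unique (LabTree 1) where
  default := Quot.mk _ ⟨leaf 1, rfl⟩
  uniq := Quot.ind fun t ↦
    congrArg (Quot.mk _) (Subtype.ext (eq_leaf_of_labels_eq_singleton t.2))

def clusters : LabTree n → Finset (Multiset ℕ) :=
  Quot.lift (fun t ↦ t.1.clusters) fun _ _ h ↦ h.clusters_eq

lemma card_clusters (q : LabTree n) : q.clusters.card = 2 * n - 1 := by
  induction q using Quot.ind with
  | mk t =>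
    show t.1.clusters.card = _
    rw [LTree.card_clusters (nodup_of_labels_eq t.2), t.2, Finset.card_val, Nat.card_Icc,
      Nat.add_sub_cancel]

def eraseLast (hn : 1 ≤ n) : LabTree (n + 1) → Σ q : LabTree n, q.clusters :=
  Quot.lift
    (fun t ↦ ⟨Quot.mk _ ⟨t.1.eraseLeaf (n + 1), labels_eraseLeaf_of_labels_eq hn t.2⟩,
      t.1.siblingLabels (n + 1),
      siblingLabels_mem_clusters (by simp [t.2]) (labels_ne_singleton_of_labels_eq hn t.2)⟩)
    fun t _ h ↦ Sigma.subtype_ext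
      (Quot.sound (h.eraseLeaf (nodup_of_labels_eq t.2) (by simp [t.2])))
      (h.siblingLabels_eq (nodup_of_labels_eq t.2) (by simp [t.2]))

/-- Graft the leaf `n + 1` beside the cluster `S`; when `S` is not a cluster, at the root. -/
def graftLast (S : Multiset ℕ) : LabTree n → LabTree (n + 1) :=
  Quot.lift
    (fun t ↦ Quot.mk _ ⟨t.1.graft (n + 1) (if S ∈ t.1.clusters then S else t.1.labels),
      labels_graft_of_labels_eq _ t.2⟩)
    fun t t' h ↦ Quot.sound <| by
      have hS : (if S ∈ t.1.clusters then S else t.1.labels) ∈ t.1.clusters := by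
        split_ifs with hS
        exacts [hS, labels_mem_clusters _]
      have hS' : (if S ∈ t'.1.clusters then S else t'.1.labels) =
          if S ∈ t.1.clusters then S else t.1.labels := by
        rw [h.clusters_eq, h.labels_eq]
      show Flip (t.1.graft _ _) (t'.1.graft _ _)
      rw [hS']
      exact h.graft (nodup_of_labels_eq t.2) hS

lemma graftLast_mk {S : Multiset ℕ} {t : {t : LTree // t.labels = (Finset.Icc 1 n).val}}
    (hS : S ∈ t.1.clusters) :
    graftLast S (Quot.mk _ t) =
      Quot.mk _ ⟨t.1.graft (n + 1) S, labels_graft_of_labels_eq S t.2⟩ :=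
  congrArg (Quot.mk _) (Subtype.ext (congrArg (t.1.graft (n + 1)) (if_pos hS)))

def eraseLastEquiv (hn : 1 ≤ n) : LabTree (n + 1) ≃ Σ q : LabTree n, q.clusters where
  toFun := eraseLast hn
  invFun x := graftLast x.2 x.1
  left_inv := Quot.ind fun t ↦ by
    have hm : n + 1 ∈ t.1.labels := by simp [t.2]
    have hne := labels_ne_singleton_of_labels_eq hn t.2
    refine (graftLast_mk (siblingLabels_mem_clusters hm hne)).trans (Quot.sound ?_)
    exact graft_eraseLeaf (nodup_of_labels_eq t.2) hm hne
  right_inv := by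
    rintro ⟨q, S, hS⟩
    induction q using Quot.ind with
    | mk t =>
      have hm : n + 1 ∉ t.1.labels := by simp [t.2]
      have hnd := nodup_of_labels_eq t.2
      show eraseLast hn (graftLast S (Quot.mk _ t)) = _
      rw [graftLast_mk hS]
      exact Sigma.subtype_ext (congrArg (Quot.mk _) (Subtype.ext (eraseLeaf_graft hnd hm hS)))
        (siblingLabels_graft hnd hm hS)

end LabTree

open Nat in
theorem LabTree.card_eq_doubleFactorial {n : ℕ} (hn : 1 ≤ n) :
    Nat.card (LabTree n) = (2 * n - 3)‼ := by
  induction n, hn using Nat.le_induction with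
  | base => simp
  | succ n hn ih =>
    rw [Nat.card_congr (eraseLastEquiv hn),
      Nat.card_sigma_of_forall_card_eq (k := 2 * n - 1) fun q ↦ by simp [card_clusters q], ih,
      show 2 * (n + 1) - 3 = 2 * n - 2 + 1 by omega, Nat.doubleFactorial_add_one,
      show 2 * n - 2 + 1 = 2 * n - 1 by omega, show 2 * n - 2 - 1 = 2 * n - 3 by omega, mul_comm]

/-- Labelled binary trees with `n ≥ 2` leaves are in bijection with perfect matchings of
`{1,…,2n-2}`; in particular there are `(2n-3)!!` of them. -/
theorem labTree_equiv_matching (n : ℕ) (hn : 2 ≤ n) :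
    Nonempty (LabTree n ≃ Matching (2 * n - 2)) ∧
      Nat.card (LabTree n) = Nat.doubleFactorial (2 * n - 3) := by
  have hTree : Nat.card (LabTree n) = Nat.doubleFactorial (2 * n - 3) :=
    LabTree.card_eq_doubleFactorial (by omega)
  have hMatching : Nat.card (Matching (2 * n - 2)) = Nat.doubleFactorial (2 * n - 3) := by
    rw [show 2 * n - 3 = 2 * (n - 1) - 1 by omega]
    exact PerfectMatching.card_eq_doubleFactorial (n - 1) _ (by simp; omega)
  have hpos := Nat.doubleFactorial_pos (2 * n - 3)
  have : Finite (LabTree n) := Nat.finite_of_card_ne_zero (by omega)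
  have : Finite (Matching (2 * n - 2)) := Nat.finite_of_card_ne_zero (by omega)
  exact ⟨Finite.card_eq.1 (hTree.trans hMatching.symm), hTree⟩
end

section
/- The volume of the polytope Π_n = {(x_1,...,x_n) ∈ [-1,1]^n : x_1 + ... + x_j ≥ 0 for all j = 1,...,n} equals (2n-1)!!/n!. -/
open MeasureTheory Finset
open scoped ENNReal

namespace PPoly

noncomputable section

/-- prefix sum of the first `j` coordinates -/
def pref {n : ℕ} (x : Fin n → ℝ) (j : ℕ) : ℝ :=
  ∑ i : Fin n, if (i : ℕ) < j then x i else 0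

def cube (n : ℕ) : Set (Fin n → ℝ) := {x | ∀ i, x i ∈ Set.Icc (-1:ℝ) 1}

def Pos (n : ℕ) : Set (Fin n → ℝ) := {x | x ∈ cube n ∧ ∀ j, 0 < j → j ≤ n → 0 < pref x j}

def Neg (n : ℕ) : Set (Fin n → ℝ) := {x | x ∈ cube n ∧ ∀ j, 0 < j → j ≤ n → pref x j < 0}

def Am (k : ℕ) : Set (Fin k → ℝ) := {y | y ∈ cube k ∧ ∀ j < k, pref y j < pref y k}

def Mk (n k : ℕ) : Set (Fin n → ℝ) := {x | x ∈ cube n ∧ ∀ j ≤ n, j ≠ k → pref x j < pref x k}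

lemma pref_zero {n : ℕ} (x : Fin n → ℝ) : pref x 0 = 0 := by
  simp [pref]

lemma pref_of_ge {n : ℕ} (x : Fin n → ℝ) {j : ℕ} (h : n ≤ j) : pref x j = pref x n := by
  unfold pref
  refine Finset.sum_congr rfl fun i _ => ?_
  have := i.isLt
  simp [Nat.lt_of_lt_of_le i.isLt h, i.isLt]

lemma measurable_pref {n : ℕ} (j : ℕ) : Measurable (fun x : Fin n → ℝ => pref x j) := by
  unfold pref
  exact Finset.measurable_sum _ fun i _ => by
    by_cases h : (i:ℕ) < j <;> simp [h, measurable_pi_apply]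

lemma measurableSet_cube (n : ℕ) : MeasurableSet (cube n) := by
  have : cube n = Set.pi Set.univ (fun _ : Fin n => Set.Icc (-1:ℝ) 1) := by
    ext x; exact (Set.mem_univ_pi).symm
  rw [this]
  exact MeasurableSet.univ_pi fun i => measurableSet_Icc

lemma measurableSet_Mk (n k : ℕ) : MeasurableSet (Mk n k) := by
  have : Mk n k = cube n ∩ ⋂ (j : ℕ) (_ : j ≤ n) (_ : j ≠ k),
      {x | pref x j < pref x k} := by
    ext x
    simp only [Mk, Set.mem_setOf_eq, Set.mem_inter_iff, Set.mem_iInter]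
  rw [this]
  refine (measurableSet_cube n).inter ?_
  refine MeasurableSet.iInter fun j => MeasurableSet.iInter fun _ => MeasurableSet.iInter fun _ => ?_
  exact measurableSet_lt (measurable_pref j) (measurable_pref k)

lemma measurableSet_Pos (n : ℕ) : MeasurableSet (Pos n) := by
  have : Pos n = cube n ∩ ⋂ (j : ℕ) (_ : 0 < j) (_ : j ≤ n), {x | 0 < pref x j} := by
    ext x
    simp only [Pos, Set.mem_setOf_eq, Set.mem_inter_iff, Set.mem_iInter]
  rw [this]
  refine (measurableSet_cube n).inter ?_
  refine MeasurableSet.iInter fun j => MeasurableSet.iInter fun _ => MeasurableSet.iInter fun _ => ?_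
  exact measurableSet_lt measurable_const (measurable_pref j)

lemma measurableSet_Neg (n : ℕ) : MeasurableSet (Neg n) := by
  have : Neg n = cube n ∩ ⋂ (j : ℕ) (_ : 0 < j) (_ : j ≤ n), {x | pref x j < 0} := by
    ext x
    simp only [Neg, Set.mem_setOf_eq, Set.mem_inter_iff, Set.mem_iInter]
  rw [this]
  refine (measurableSet_cube n).inter ?_
  refine MeasurableSet.iInter fun j => MeasurableSet.iInter fun _ => MeasurableSet.iInter fun _ => ?_
  exact measurableSet_lt (measurable_pref j) measurable_const

lemma measurableSet_Am (k : ℕ) : MeasurableSet (Am k) := by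
  have : Am k = cube k ∩ ⋂ (j : ℕ) (_ : j < k), {y | pref y j < pref y k} := by
    ext x
    simp only [Am, Set.mem_setOf_eq, Set.mem_inter_iff, Set.mem_iInter]
  rw [this]
  refine (measurableSet_cube k).inter ?_
  refine MeasurableSet.iInter fun j => MeasurableSet.iInter fun _ => ?_
  exact measurableSet_lt (measurable_pref j) (measurable_pref k)

lemma volume_cube (n : ℕ) : volume (cube n) = 2 ^ n := by
  have : cube n = Set.pi Set.univ (fun _ : Fin n => Set.Icc (-1:ℝ) 1) := by
    ext x; exact (Set.mem_univ_pi).symm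
  rw [this, volume_pi_pi]
  simp only [Real.volume_Icc]
  norm_num


lemma pref_neg {n : ℕ} (x : Fin n → ℝ) (j : ℕ) : pref (-x) j = - pref x j := by
  unfold pref
  rw [← Finset.sum_neg_distrib]
  refine Finset.sum_congr rfl fun i _ => ?_
  by_cases h : (i:ℕ) < j <;> simp [h]

lemma cube_neg {n : ℕ} (x : Fin n → ℝ) : -x ∈ cube n ↔ x ∈ cube n := by
  simp only [cube, Set.mem_setOf_eq, Pi.neg_apply, Set.mem_Icc]
  constructor <;> intro h i <;> have := h i <;> constructor <;> linarith [this.1, this.2]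

lemma volume_Neg (n : ℕ) : volume (Neg n) = volume (Pos n) := by
  have h : Pos n = -(Neg n) := by
    ext x
    simp only [Set.mem_neg, Pos, Neg, Set.mem_setOf_eq, pref_neg, cube_neg]
    constructor
    · rintro ⟨hc, hp⟩
      exact ⟨hc, fun j hj hj' => by have := hp j hj hj'; linarith⟩
    · rintro ⟨hc, hp⟩
      exact ⟨hc, fun j hj hj' => by have := hp j hj hj'; linarith⟩
  rw [h, Measure.measure_neg]

lemma pref_rev {k : ℕ} (x : Fin k → ℝ) (m : ℕ) (hm : m ≤ k) :
    pref (x ∘ Fin.rev) m = pref x k - pref x (k - m) := by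
  have h1 : pref (x ∘ Fin.rev) m = ∑ i : Fin k, if k - m ≤ (i:ℕ) then x i else 0 := by
    unfold pref
    refine Fintype.sum_equiv Fin.revPerm _ _ fun i => ?_
    simp only [Function.comp_apply, Fin.revPerm_apply, Fin.rev_rev]
    have hi := i.isLt
    have : ((Fin.rev i : Fin k) : ℕ) = k - 1 - (i:ℕ) := Fin.val_rev i ▸ by omega
    rw [this]
    by_cases h : (i:ℕ) < m
    · rw [if_pos h, if_pos (by omega)]
    · rw [if_neg h, if_neg (by omega)]
  have h2 : pref x k = pref x (k - m) + ∑ i : Fin k, if k - m ≤ (i:ℕ) then x i else 0 := by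
    unfold pref
    rw [← Finset.sum_add_distrib]
    refine Finset.sum_congr rfl fun i _ => ?_
    have hi := i.isLt
    by_cases h : (i:ℕ) < k - m
    · rw [if_pos hi, if_pos h, if_neg (by omega), add_zero]
    · rw [if_pos hi, if_neg h, if_pos (by omega), zero_add]
  rw [h1]; linarith

lemma volume_Am (k : ℕ) : volume (Am k) = volume (Pos k) := by
  classical
  set e : Fin k ≃ Fin k := Fin.revPerm
  have hmp : MeasurePreserving (MeasurableEquiv.piCongrLeft (fun _ : Fin k => ℝ) e)
      volume volume := volume_measurePreserving_piCongrLeft _ e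
  have happ : ∀ x : Fin k → ℝ,
      (MeasurableEquiv.piCongrLeft (fun _ : Fin k => ℝ) e) x = x ∘ Fin.rev := by
    intro x
    funext j
    have h2 := Equiv.piCongrLeft_apply_apply (fun _ : Fin k => ℝ) e x (Fin.rev j)
    simpa [e, MeasurableEquiv.coe_piCongrLeft] using h2
  have hpre : (MeasurableEquiv.piCongrLeft (fun _ : Fin k => ℝ) e) ⁻¹' Am k = Pos k := by
    ext x
    simp only [Set.mem_preimage, happ]
    constructor
    · rintro ⟨hc, hp⟩
      refine ⟨fun i => by simpa using hc (Fin.rev i), fun m hm hm' => ?_⟩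
      have := hp (k - m) (by omega)
      rw [pref_rev x (k - m) (by omega), pref_rev x k le_rfl] at this
      have hkk : k - (k - m) = m := by omega
      rw [hkk] at this
      simp only [Nat.sub_self, pref_zero] at this
      linarith
    · rintro ⟨hc, hp⟩
      refine ⟨fun i => hc (Fin.rev i), fun j hj => ?_⟩
      rw [pref_rev x j (by omega), pref_rev x k le_rfl]
      simp only [Nat.sub_self, pref_zero]
      have := hp (k - j) (by omega) (by omega)
      linarith
  rw [← hpre, hmp.measure_preimage (measurableSet_Am k).nullMeasurableSet]


section Split
variable {n k : ℕ}

def seq (hk : k ≤ n) : Fin k ⊕ Fin (n - k) ≃ Fin n :=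
  finSumFinEquiv.trans (finCongr (by omega))

def Fsplit (hk : k ≤ n) : ((Fin k → ℝ) × (Fin (n - k) → ℝ)) ≃ᵐ (Fin n → ℝ) :=
  (MeasurableEquiv.sumPiEquivProdPi (fun _ : Fin k ⊕ Fin (n-k) => ℝ)).symm.trans
    (MeasurableEquiv.piCongrLeft (fun _ : Fin n => ℝ) (seq hk))

lemma Fsplit_mp (hk : k ≤ n) : MeasurePreserving (Fsplit hk) volume volume := by
  rw [Fsplit, MeasurableEquiv.coe_trans]
  exact (volume_measurePreserving_piCongrLeft (fun _ : Fin n => ℝ) (seq hk)).comp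
    (volume_measurePreserving_sumPiEquivProdPi_symm (fun _ : Fin k ⊕ Fin (n-k) => ℝ))

lemma seq_inl_val (hk : k ≤ n) (i : Fin k) : ((seq hk (Sum.inl i) : Fin n) : ℕ) = (i : ℕ) := by
  simp [seq]

lemma seq_inr_val (hk : k ≤ n) (i : Fin (n - k)) : ((seq hk (Sum.inr i) : Fin n) : ℕ) = k + (i : ℕ) := by
  simp [seq]

lemma Fsplit_apply (hk : k ≤ n) (y : Fin k → ℝ) (z : Fin (n - k) → ℝ) (s : Fin k ⊕ Fin (n - k)) :
    Fsplit hk (y, z) (seq hk s) = Sum.elim y z s := by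
  show (MeasurableEquiv.piCongrLeft (fun _ : Fin n => ℝ) (seq hk))
      ((MeasurableEquiv.sumPiEquivProdPi (fun _ => ℝ)).symm (y, z)) (seq hk s) = _
  rw [MeasurableEquiv.coe_piCongrLeft,
    Equiv.piCongrLeft_apply_apply (fun _ : Fin n => ℝ) (seq hk) _ s]
  cases s <;> rfl

lemma pref_Fsplit (hk : k ≤ n) (y : Fin k → ℝ) (z : Fin (n - k) → ℝ) (j : ℕ) :
    pref (Fsplit hk (y, z)) j = pref y j + pref z (j - k) := by
  unfold pref
  rw [← Fintype.sum_equiv (seq hk)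
    (fun s => if ((seq hk s : Fin n) : ℕ) < j then Fsplit hk (y, z) (seq hk s) else 0)
    (fun i => if (i : ℕ) < j then Fsplit hk (y, z) i else 0) (fun s => rfl)]
  rw [Fintype.sum_sum_type]
  congr 1
  · refine Finset.sum_congr rfl fun i _ => ?_
    rw [seq_inl_val hk i, Fsplit_apply hk y z (Sum.inl i)]
    simp only [Sum.elim_inl]
  · refine Finset.sum_congr rfl fun i _ => ?_
    rw [seq_inr_val hk i, Fsplit_apply hk y z (Sum.inr i)]
    simp only [Sum.elim_inr]
    by_cases h : k + (i:ℕ) < j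
    · rw [if_pos h, if_pos (by omega)]
    · rw [if_neg h, if_neg (by omega)]

lemma cube_Fsplit (hk : k ≤ n) (y : Fin k → ℝ) (z : Fin (n - k) → ℝ) :
    Fsplit hk (y, z) ∈ cube n ↔ y ∈ cube k ∧ z ∈ cube (n - k) := by
  constructor
  · intro h
    constructor
    · intro i
      have := h (seq hk (Sum.inl i))
      rwa [Fsplit_apply hk y z (Sum.inl i)] at this
    · intro i
      have := h (seq hk (Sum.inr i))
      rwa [Fsplit_apply hk y z (Sum.inr i)] at this
  · rintro ⟨hy, hz⟩ i
    obtain ⟨s, rfl⟩ := (seq hk).surjective i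
    rw [Fsplit_apply hk y z s]
    cases s with
    | inl i => exact hy i
    | inr i => exact hz i

lemma Fsplit_preimage_Mk (hk : k ≤ n) :
    (Fsplit hk) ⁻¹' (Mk n k) = (Am k) ×ˢ (Neg (n - k)) := by
  ext ⟨y, z⟩
  simp only [Set.mem_preimage, Mk, Am, Neg, Set.mem_setOf_eq, Set.mem_prod]
  rw [cube_Fsplit hk]
  constructor
  · rintro ⟨⟨hy, hz⟩, hp⟩
    refine ⟨⟨hy, fun j hj => ?_⟩, hz, fun m hm hm' => ?_⟩
    · have := hp j (by omega) (by omega)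
      rw [pref_Fsplit, pref_Fsplit, Nat.sub_eq_zero_of_le (le_of_lt hj), Nat.sub_self] at this
      simp only [pref_zero] at this
      linarith
    · have := hp (k + m) (by omega) (by omega)
      rw [pref_Fsplit, pref_Fsplit, Nat.add_sub_cancel_left, Nat.sub_self] at this
      simp only [pref_zero] at this
      rw [pref_of_ge y (show k ≤ k + m by omega)] at this
      linarith
  · rintro ⟨⟨hy, hyp⟩, hz, hzp⟩
    refine ⟨⟨hy, hz⟩, fun j hj hjk => ?_⟩
    rw [pref_Fsplit, pref_Fsplit, Nat.sub_self]
    simp only [pref_zero]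
    rcases lt_or_gt_of_ne hjk with h | h
    · rw [Nat.sub_eq_zero_of_le (le_of_lt h), pref_zero]
      have := hyp j h
      linarith
    · rw [pref_of_ge y (le_of_lt h)]
      have := hzp (j - k) (by omega) (by omega)
      linarith

lemma volume_Mk (hk : k ≤ n) :
    volume (Mk n k) = volume (Am k) * volume (Neg (n - k)) := by
  rw [← (Fsplit_mp hk).measure_preimage (measurableSet_Mk n k).nullMeasurableSet,
    Fsplit_preimage_Mk hk]
  rw [show (volume : Measure ((Fin k → ℝ) × (Fin (n-k) → ℝ)))
      = (volume : Measure (Fin k → ℝ)).prod (volume : Measure (Fin (n-k) → ℝ)) from rfl]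
  exact Measure.prod_prod _ _

end Split

/-- prefix sum as a linear map -/
def lpref (n j : ℕ) : (Fin n → ℝ) →ₗ[ℝ] ℝ where
  toFun x := pref x j
  map_add' x y := by
    unfold pref
    rw [← Finset.sum_add_distrib]
    exact Finset.sum_congr rfl fun i _ => by by_cases h : (i:ℕ) < j <;> simp [h]
  map_smul' c x := by
    unfold pref
    simp only [RingHom.id_apply, smul_eq_mul]
    rw [Finset.mul_sum]
    exact Finset.sum_congr rfl fun i _ => by by_cases h : (i:ℕ) < j <;> simp [h]

lemma pref_single {n : ℕ} (t : ℕ) (ht : t < n) (m : ℕ) :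
    pref (Pi.single (⟨t, ht⟩ : Fin n) (1:ℝ)) m = if t < m then 1 else 0 := by
  unfold pref
  rw [Finset.sum_eq_single (⟨t, ht⟩ : Fin n)]
  · simp [Pi.single_eq_same]
  · intro i _ hne
    simp [Pi.single_eq_of_ne hne]
  · intro h; exact absurd (Finset.mem_univ _) h

lemma null_of_lpref_ne {n : ℕ} (l : (Fin n → ℝ) →ₗ[ℝ] ℝ) (x0 : Fin n → ℝ) (h : l x0 ≠ 0) :
    volume {x : Fin n → ℝ | l x = 0} = 0 := by
  have hker : {x : Fin n → ℝ | l x = 0} = (LinearMap.ker l : Set (Fin n → ℝ)) := by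
    ext x; simp [LinearMap.mem_ker]
  rw [hker]
  refine Measure.addHaar_submodule volume _ ?_
  intro htop
  have hx0 : x0 ∈ LinearMap.ker l := htop.symm ▸ Submodule.mem_top
  exact h (LinearMap.mem_ker.mp hx0)

lemma volume_pref_eq_pref {n j k : ℕ} (hjk : j ≠ k) (hj : j ≤ n) (hk : k ≤ n) :
    volume {x : Fin n → ℝ | pref x j = pref x k} = 0 := by
  -- wlog j < k
  rcases Nat.lt_or_ge j k with h | h
  · have ht : j < n := lt_of_lt_of_le h hk
    have hset : {x : Fin n → ℝ | pref x j = pref x k}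
        = {x : Fin n → ℝ | (lpref n k - lpref n j) x = 0} := by
      ext x
      simp only [Set.mem_setOf_eq, LinearMap.sub_apply]
      show pref x j = pref x k ↔ pref x k - pref x j = 0
      constructor <;> intro <;> linarith
    rw [hset]
    refine null_of_lpref_ne _ (Pi.single (⟨j, ht⟩ : Fin n) 1) ?_
    show pref _ k - pref _ j ≠ 0
    rw [pref_single j ht k, pref_single j ht j]
    rw [if_pos h, if_neg (lt_irrefl j)]
    norm_num
  · have h' : k < j := lt_of_le_of_ne h (Ne.symm hjk)
    have ht : k < n := lt_of_lt_of_le h' hj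
    have hset : {x : Fin n → ℝ | pref x j = pref x k}
        = {x : Fin n → ℝ | (lpref n j - lpref n k) x = 0} := by
      ext x
      simp only [Set.mem_setOf_eq, LinearMap.sub_apply]
      show pref x j = pref x k ↔ pref x j - pref x k = 0
      constructor <;> intro <;> linarith
    rw [hset]
    refine null_of_lpref_ne _ (Pi.single (⟨k, ht⟩ : Fin n) 1) ?_
    show pref _ j - pref _ k ≠ 0
    rw [pref_single k ht j, pref_single k ht k]
    rw [if_pos h', if_neg (lt_irrefl k)]
    norm_num

lemma volume_pref_eq_zero {n j : ℕ} (hj0 : 0 < j) (hj : j ≤ n) :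
    volume {x : Fin n → ℝ | pref x j = 0} = 0 := by
  have ht : 0 < n := lt_of_lt_of_le hj0 hj
  refine null_of_lpref_ne (lpref n j) (Pi.single (⟨0, ht⟩ : Fin n) 1) ?_
  show pref _ j ≠ 0
  rw [pref_single 0 ht j, if_pos hj0]
  norm_num

lemma volume_cube_partition (n : ℕ) :
    volume (cube n) = ∑ k ∈ Finset.range (n+1), volume (Mk n k) := by
  classical
  set N : Set (Fin n → ℝ) :=
    ⋃ (j : ℕ) (_ : j ≤ n) (k : ℕ) (_ : k ≤ n) (_ : j ≠ k), {x | pref x j = pref x k} with hN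
  have hNnull : volume N = 0 := by
    rw [hN]
    refine measure_iUnion_null fun j => measure_iUnion_null fun hj =>
      measure_iUnion_null fun k => measure_iUnion_null fun hk =>
        measure_iUnion_null fun hjk => ?_
    exact volume_pref_eq_pref hjk hj hk
  have hsub : cube n ⊆ (⋃ k ∈ Finset.range (n+1), Mk n k) ∪ N := by
    intro x hx
    obtain ⟨k, hkmem, hkmax⟩ := Finset.exists_max_image (Finset.range (n+1))
      (fun j => pref x j) ⟨0, Finset.mem_range.2 (Nat.succ_pos n)⟩
    by_cases hxN : x ∈ N
    · exact Or.inr hxN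
    · refine Or.inl (Set.mem_biUnion hkmem ?_)
      refine ⟨hx, fun j hj hjk => ?_⟩
      have hle := hkmax j (Finset.mem_range.2 (Nat.lt_succ_of_le hj))
      rcases lt_or_eq_of_le hle with h | h
      · exact h
      · exfalso
        apply hxN
        rw [hN]
        refine Set.mem_iUnion.2 ⟨j, Set.mem_iUnion.2 ⟨hj, Set.mem_iUnion.2 ⟨k,
          Set.mem_iUnion.2 ⟨?_, Set.mem_iUnion.2 ⟨hjk, h⟩⟩⟩⟩⟩
        exact Nat.lt_succ_iff.mp (Finset.mem_range.mp hkmem)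
  have hsup : (⋃ k ∈ Finset.range (n+1), Mk n k) ⊆ cube n := by
    intro x hx
    obtain ⟨k, _, hk⟩ := Set.mem_iUnion₂.mp hx
    exact hk.1
  have hd : Set.PairwiseDisjoint ↑(Finset.range (n+1)) (Mk n) := by
    intro a ha b hb hab
    refine Set.disjoint_left.2 fun x hxa hxb => ?_
    have h1 := hxa.2 b (Nat.lt_succ_iff.mp (Finset.mem_range.mp hb)) (Ne.symm hab)
    have h2 := hxb.2 a (Nat.lt_succ_iff.mp (Finset.mem_range.mp ha)) hab
    linarith
  have hU : volume (⋃ k ∈ Finset.range (n+1), Mk n k)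
      = ∑ k ∈ Finset.range (n+1), volume (Mk n k) :=
    measure_biUnion_finset hd (fun k _ => measurableSet_Mk n k)
  refine le_antisymm ?_ ?_
  · calc volume (cube n) ≤ volume ((⋃ k ∈ Finset.range (n+1), Mk n k) ∪ N) :=
          measure_mono hsub
      _ ≤ volume (⋃ k ∈ Finset.range (n+1), Mk n k) + volume N := measure_union_le _ _
      _ = volume (⋃ k ∈ Finset.range (n+1), Mk n k) := by rw [hNnull, add_zero]
      _ = _ := hU
  · rw [← hU]
    exact measure_mono hsup


def r (n : ℕ) : ℝ := (Nat.doubleFactorial (2 * n - 1) : ℝ) / (n.factorial : ℝ)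

lemma r_pos (n : ℕ) : 0 < r n :=
  div_pos (by exact_mod_cast Nat.doubleFactorial_pos _) (by exact_mod_cast n.factorial_pos)

lemma r_zero : r 0 = 1 := by norm_num [r]

lemma doubleFactorial_step (k : ℕ) :
    Nat.doubleFactorial (2 * (k+1) - 1) = (2*k+1) * Nat.doubleFactorial (2*k - 1) := by
  cases k with
  | zero => rfl
  | succ m =>
    have h1 : 2 * (m + 2) - 1 = (2*m+1) + 2 := by omega
    have h2 : 2 * (m + 1) - 1 = 2*m+1 := by omega
    rw [h1, h2, Nat.doubleFactorial_add_two]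
    have h3 : 2*m+1+2 = 2*(m+1)+1 := by omega
    rw [h3]

lemma r_rec (k : ℕ) : ((k:ℝ)+1) * r (k+1) = (2*(k:ℝ)+1) * r k := by
  unfold r
  rw [doubleFactorial_step, Nat.factorial_succ]
  have hf : (k.factorial : ℝ) ≠ 0 := by exact_mod_cast k.factorial_pos.ne'
  field_simp
  push_cast
  ring

lemma two_mul_sum_weighted (n : ℕ) :
    2 * ∑ k ∈ range (n+1), (k:ℝ) * (r k * r (n-k))
      = (n:ℝ) * ∑ k ∈ range (n+1), r k * r (n-k) := by
  have hrefl : ∑ k ∈ range (n+1), (k:ℝ) * (r k * r (n-k))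
      = ∑ k ∈ range (n+1), ((n-k : ℕ):ℝ) * (r (n-k) * r (n-(n-k))) := by
    rw [← Finset.sum_range_reflect (fun k => (k:ℝ) * (r k * r (n-k))) (n+1)]
    refine Finset.sum_congr rfl fun k hk => ?_
    have hk' : k ≤ n := Nat.lt_succ_iff.mp (Finset.mem_range.mp hk)
    have h1 : n + 1 - 1 - k = n - k := by omega
    rw [h1]
  have hsub : ∀ k ∈ range (n+1), n - (n - k) = k := fun k hk => by
    have := Nat.lt_succ_iff.mp (Finset.mem_range.mp hk); omega
  calc 2 * ∑ k ∈ range (n+1), (k:ℝ) * (r k * r (n-k))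
      = ∑ k ∈ range (n+1), (k:ℝ) * (r k * r (n-k))
        + ∑ k ∈ range (n+1), ((n-k : ℕ):ℝ) * (r (n-k) * r (n-(n-k))) := by
        rw [← hrefl]; ring
    _ = ∑ k ∈ range (n+1), (((k:ℝ) + ((n-k : ℕ):ℝ)) * (r k * r (n-k))) := by
        rw [← Finset.sum_add_distrib]
        refine Finset.sum_congr rfl fun k hk => ?_
        rw [hsub k hk]
        ring
    _ = (n:ℝ) * ∑ k ∈ range (n+1), r k * r (n-k) := by
        rw [Finset.mul_sum]
        refine Finset.sum_congr rfl fun k hk => ?_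
        have hk' : k ≤ n := Nat.lt_succ_iff.mp (Finset.mem_range.mp hk)
        have : ((n-k : ℕ):ℝ) = (n:ℝ) - (k:ℝ) := by
          rw [Nat.cast_sub hk']
        rw [this]; ring

lemma r_conv (n : ℕ) : ∑ k ∈ range (n+1), r k * r (n-k) = 2 ^ n := by
  induction n with
  | zero => simp [r_zero]
  | succ n ih =>
    have key : ((n:ℝ)+1) * ∑ k ∈ range (n+2), r k * r (n+1-k)
        = ((n:ℝ)+1) * (2 * ∑ k ∈ range (n+1), r k * r (n-k)) := by
      have h1 : ((n:ℝ)+1) * ∑ k ∈ range (n+2), r k * r (n+1-k)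
          = 2 * ∑ k ∈ range (n+2), (k:ℝ) * (r k * r (n+1-k)) := by
        have := two_mul_sum_weighted (n+1)
        push_cast at this ⊢
        linarith
      have h2 : ∑ k ∈ range (n+2), (k:ℝ) * (r k * r (n+1-k))
          = ∑ j ∈ range (n+1), (2*(j:ℝ)+1) * (r j * r (n-j)) := by
        rw [Finset.sum_range_succ' (fun k => (k:ℝ) * (r k * r (n+1-k))) (n+1)]
        simp only [Nat.cast_zero, zero_mul, add_zero]
        refine Finset.sum_congr rfl fun j hj => ?_
        have hj' : j ≤ n := Nat.lt_succ_iff.mp (Finset.mem_range.mp hj)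
        have hsub : n + 1 - (j+1) = n - j := by omega
        rw [hsub]
        have := r_rec j
        push_cast
        rw [← mul_assoc, ← mul_assoc, this]
      have h3 : ∑ j ∈ range (n+1), (2*(j:ℝ)+1) * (r j * r (n-j))
          = 2 * ∑ j ∈ range (n+1), (j:ℝ) * (r j * r (n-j))
            + ∑ j ∈ range (n+1), r j * r (n-j) := by
        rw [Finset.mul_sum, ← Finset.sum_add_distrib]
        exact Finset.sum_congr rfl fun j _ => by ring
      rw [h1, h2, h3, two_mul_sum_weighted n]
      ring
    have hne : ((n:ℝ)+1) ≠ 0 := by positivity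
    have := mul_left_cancel₀ hne key
    rw [this, ih]
    ring

lemma conv_vol (n : ℕ) :
    ∑ k ∈ range (n+1), volume (Pos k) * volume (Pos (n-k)) = 2 ^ n := by
  rw [← volume_cube n, volume_cube_partition n]
  refine Finset.sum_congr rfl fun k hk => ?_
  have hk' : k ≤ n := Nat.lt_succ_iff.mp (Finset.mem_range.mp hk)
  rw [volume_Mk hk', volume_Am, volume_Neg]

lemma Pos_zero : volume (Pos 0) = 1 := by
  have h : Pos 0 = Set.univ := by
    ext x
    simp only [Pos, cube, Set.mem_setOf_eq, Set.mem_univ, iff_true]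
    exact ⟨fun i => i.elim0, fun j hj hj' => by omega⟩
  rw [h]
  simp [MeasureTheory.volume_pi, Measure.pi_univ]

lemma Pos_lt_top (n : ℕ) : volume (Pos n) ≠ ⊤ := by
  have h : volume (Pos n) ≤ 2 ^ n := by
    rw [← volume_cube n]
    exact measure_mono fun x hx => hx.1
  exact ne_top_of_le_ne_top (by simp) h

lemma volume_Pos (n : ℕ) : volume (Pos n) = ENNReal.ofReal (r n) := by
  induction n using Nat.strong_induction_on with
  | _ n ih =>
    match n with
    | 0 => rw [Pos_zero, r_zero]; simp
    | (m+1) =>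
      set n := m + 1
      have hconv := conv_vol n
      have hconv' : ∑ k ∈ range (n+1), ENNReal.ofReal (r k) * ENNReal.ofReal (r (n-k))
          = 2 ^ n := by
        have : ∀ k, ENNReal.ofReal (r k) * ENNReal.ofReal (r (n-k))
            = ENNReal.ofReal (r k * r (n-k)) := fun k =>
          (ENNReal.ofReal_mul (r_pos k).le).symm
        simp_rw [this]
        rw [← ENNReal.ofReal_sum_of_nonneg (fun k _ => (mul_pos (r_pos k) (r_pos _)).le)]
        rw [r_conv n, ENNReal.ofReal_pow (by norm_num : (0:ℝ) ≤ 2)]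
        norm_num
      -- expand both sums: first term + middle + last term
      have hexp : ∀ f : ℕ → ℝ≥0∞, ∑ k ∈ range (n+1), f k
          = f 0 + ∑ j ∈ range m, f (j+1) + f n := by
        intro f
        rw [Finset.sum_range_succ, Finset.sum_range_succ' f m]
        ring
      rw [hexp] at hconv hconv'
      have hmid : ∑ j ∈ range m, volume (Pos (j+1)) * volume (Pos (n-(j+1)))
          = ∑ j ∈ range m, ENNReal.ofReal (r (j+1)) * ENNReal.ofReal (r (n-(j+1))) := by
        refine Finset.sum_congr rfl fun j hj => ?_
        have hj' : j < m := Finset.mem_range.mp hj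
        rw [ih (j+1) (by omega), ih (n-(j+1)) (by omega)]
      rw [hmid] at hconv
      rw [Pos_zero, Nat.sub_self, Pos_zero, Nat.sub_zero, one_mul, mul_one] at hconv
      rw [r_zero, Nat.sub_self, r_zero, Nat.sub_zero] at hconv'
      simp only [ENNReal.ofReal_one, one_mul, mul_one] at hconv'
      -- now : volume (Pos n) + M + volume (Pos n) = oR (r n) + M + oR (r n)
      set M := ∑ j ∈ range m, ENNReal.ofReal (r (j+1)) * ENNReal.ofReal (r (n-(j+1))) with hM
      have hMne : M ≠ ⊤ := by
        rw [hM]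
        refine ENNReal.sum_ne_top.mpr fun j _ => ?_
        exact (ENNReal.mul_lt_top ENNReal.ofReal_lt_top ENNReal.ofReal_lt_top).ne
      have heq : M + (volume (Pos n) + volume (Pos n))
          = M + (ENNReal.ofReal (r n) + ENNReal.ofReal (r n)) := by
        calc M + (volume (Pos n) + volume (Pos n))
            = volume (Pos n) + M + volume (Pos n) := by ring
          _ = ENNReal.ofReal (r n) + M + ENNReal.ofReal (r n) := by rw [hconv, hconv']
          _ = M + (ENNReal.ofReal (r n) + ENNReal.ofReal (r n)) := by ring
      have h2 := (ENNReal.add_right_inj hMne).mp heq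
      have h3 : (2:ℝ≥0∞) * volume (Pos n) = 2 * ENNReal.ofReal (r n) := by
        rw [two_mul, two_mul, h2]
      exact (ENNReal.mul_right_inj (by norm_num) (by norm_num)).mp h3

theorem main (n : ℕ) :
    MeasureTheory.volume
        {x : Fin n → ℝ | (∀ i, x i ∈ Set.Icc (-1 : ℝ) 1) ∧
          ∀ j ≤ n, 0 ≤ ∑ i ∈ Finset.univ.filter (fun i : Fin n => i.1 < j), x i} =
      ENNReal.ofReal ((Nat.doubleFactorial (2 * n - 1) : ℝ) / (n.factorial : ℝ)) := by
  have hfil : ∀ (x : Fin n → ℝ) (j : ℕ),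
      ∑ i ∈ Finset.univ.filter (fun i : Fin n => i.1 < j), x i = pref x j := by
    intro x j
    rw [Finset.sum_filter]
    rfl
  set T : Set (Fin n → ℝ) := {x | (∀ i, x i ∈ Set.Icc (-1 : ℝ) 1) ∧
      ∀ j ≤ n, 0 ≤ ∑ i ∈ Finset.univ.filter (fun i : Fin n => i.1 < j), x i} with hT
  have h1 : Pos n ⊆ T := by
    rintro x ⟨hc, hp⟩
    refine ⟨hc, fun j hj => ?_⟩
    rw [hfil]
    rcases Nat.eq_zero_or_pos j with h | h
    · subst h; simp [pref]
    · exact (hp j h hj).le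
  set Z : Set (Fin n → ℝ) := ⋃ (j : ℕ) (_ : 0 < j) (_ : j ≤ n), {x | pref x j = 0} with hZ
  have hZnull : volume Z = 0 := by
    rw [hZ]
    exact measure_iUnion_null fun j => measure_iUnion_null fun hj =>
      measure_iUnion_null fun hj' => volume_pref_eq_zero hj hj'
  have h2 : T ⊆ Pos n ∪ Z := by
    rintro x ⟨hc, hp⟩
    by_cases hxZ : x ∈ Z
    · exact Or.inr hxZ
    · refine Or.inl ⟨hc, fun j hj hj' => ?_⟩
      have := hp j hj'
      rw [hfil] at this
      rcases lt_or_eq_of_le this with h | h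
      · exact h
      · exfalso
        apply hxZ
        rw [hZ]
        exact Set.mem_iUnion.2 ⟨j, Set.mem_iUnion.2 ⟨hj, Set.mem_iUnion.2 ⟨hj', h.symm⟩⟩⟩
  have : volume T = volume (Pos n) := by
    refine le_antisymm ?_ (measure_mono h1)
    calc volume T ≤ volume (Pos n ∪ Z) := measure_mono h2
      _ ≤ volume (Pos n) + volume Z := measure_union_le _ _
      _ = volume (Pos n) := by rw [hZnull, add_zero]
  rw [this, volume_Pos n]
  rfl


end
end PPoly

/-- The volume of the polytope
`Π_n = {x ∈ [-1,1]^n : x_1 + … + x_j ≥ 0 for all j = 1,…,n}` is `(2n-1)!!/n!`. -/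
theorem volume_positive_polytope (n : ℕ) :
    MeasureTheory.volume
        {x : Fin n → ℝ | (∀ i, x i ∈ Set.Icc (-1 : ℝ) 1) ∧
          ∀ j ≤ n, 0 ≤ ∑ i ∈ Finset.univ.filter (fun i : Fin n => i.1 < j), x i} =
      ENNReal.ofReal ((Nat.doubleFactorial (2 * n - 1) : ℝ) / (n.factorial : ℝ)) :=
  PPoly.main n
end
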